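/- The set B = {(1−h)·z + h·z' : z ∈ E, z' ∈ 2E + i, 0 ≤ h ≤ 1} ⊆ ℂ, the union of all line segments joining a point of E to a point of 2E + i, has two-dimensional Lebesgue measure zero. -/

import Mathlib

open MeasureTheory

/-- The Cantor-like set `E = {∑_{j=1}^∞ ε_j 4^{-j} : ε_j ∈ {0,1}}`. -/
def E : Set ℝ :=
  {x | ∃ ε : ℕ → ℝ, (∀ j, ε j = 0 ∨ ε j = 1) ∧ x = ∑' j : ℕ, ε j / 4 ^ (j + 1)}

/-- `B`: the union of all segments joining a point of `E` (on the real axis) to a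
point of `2E + i`. -/
def B : Set ℂ :=
  {w | ∃ x ∈ E, ∃ y ∈ E, ∃ h ∈ Set.Icc (0 : ℝ) 1,
    w = (1 - h) * (x : ℂ) + h * (2 * (y : ℂ) + Complex.I)}

/-!
The slice of `B` at height `h ∈ [0, 1]` is `(1 - h) E + 2h E`, so by Fubini it suffices that this
set is null for almost every `h`. It is covered by `4 ^ n` copies of itself scaled by `4 ^ (-n)`;
if it had positive measure, the copies would overlap only in null sets, which forces their offsets
apart: for `t = 2h / (1 - h)`, every nonzero sum `∑_{j<n} (a_j + b_j t) 4^(-j-1)` with digits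
`a_j, b_j ∈ {-1, 0, 1}` has absolute value at least `η 4^(-n)`. A greedy choice of digits shows
that every `t ∈ [1, 4]` lies within `O(4^(-n))` of a parameter at which such a sum vanishes, so the
set of these separated parameters in `[1, 4]` is porous, hence null by the Lebesgue density
theorem; scaling by powers of `4` and `t ↦ 1 / t` reach every `t > 0`.
-/

open Set Filter Topology Metric
open scoped Pointwise ENNReal

/-- Points around which a fixed proportion of arbitrarily small balls misses `s` are not Lebesgue
density points of `s`. -/
theorem measure_eq_zero_of_frequently_gap {β : Type*} [MetricSpace β] [MeasurableSpace β]
    [BorelSpace β] [SecondCountableTopology β] [HasBesicovitchCovering β] {μ : Measure β}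
    [IsLocallyFiniteMeasure μ] {s : Set β} {c : ℝ≥0∞} (hc : c ≠ 0)
    (hgap : ∀ᵐ x ∂μ.restrict s, ∃ᶠ r in 𝓝[>] 0, ∃ H ⊆ closedBall x r,
      MeasurableSet H ∧ Disjoint H s ∧ c * μ (closedBall x r) ≤ μ H) :
    μ s = 0 := by
  rw [← Measure.restrict_eq_zero, ← ae_eq_bot, ← eventually_false_iff_eq_bot]
  filter_upwards [hgap, Besicovitch.ae_tendsto_measure_inter_div μ s] with x hgap hlim
  have hfreq : ∃ᶠ r in 𝓝[>] (0 : ℝ),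
      μ (s ∩ closedBall x r) / μ (closedBall x r) ∈ {y | y + c ≤ 1} := by
    refine (hgap.and_eventually (hlim.eventually (lt_mem_nhds zero_lt_one))).mono ?_
    rintro r ⟨⟨H, hHB, hH, hHs, hcH⟩, hpos⟩
    obtain ⟨hsB, hBtop⟩ := ENNReal.div_pos_iff.1 hpos
    have hB0 : μ (closedBall x r) ≠ 0 := ne_bot_of_le_ne_bot hsB (measure_mono inter_subset_right)
    have hsum : μ (s ∩ closedBall x r) + c * μ (closedBall x r) ≤ μ (closedBall x r) := calc
      _ ≤ μ (s ∩ closedBall x r) + μ H := by gcongr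
      _ = μ ((s ∩ closedBall x r) ∪ H) :=
        (measure_union (disjoint_of_subset_left inter_subset_left hHs.symm) hH).symm
      _ ≤ μ (closedBall x r) := measure_mono (union_subset inter_subset_right hHB)
    calc _ = (μ (s ∩ closedBall x r) + c * μ (closedBall x r)) / μ (closedBall x r) := by
          rw [ENNReal.add_div, ENNReal.mul_div_cancel_right hB0 hBtop]
      _ ≤ μ (closedBall x r) / μ (closedBall x r) := by gcongr
      _ = 1 := ENNReal.div_self hB0 hBtop
  have h1c : (1 : ℝ≥0∞) + c ≤ 1 := (isClosed_le (continuous_id.add continuous_const)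
    continuous_const).mem_of_frequently_of_tendsto hfreq hlim
  exact hc (nonpos_iff_eq_zero.1
    ((ENNReal.cancel_of_ne ENNReal.one_ne_top).add_le_iff_nonpos_right.1 h1c))

lemma measure_inter_eq_zero_of_sum_le {α ι : Type*} [MeasurableSpace α] {μ : Measure α}
    {s : Finset ι} {A : ι → Set α} (hsum : ∑ k ∈ s, μ (A k) ≤ μ (⋃ k ∈ s, A k))
    (hfin : ∑ k ∈ s, μ (A k) ≠ ∞) {i j : ι} (hi : i ∈ s) (hj : j ∈ s) (hij : i ≠ j)
    (hAi : MeasurableSet (A i)) : μ (A j ∩ A i) = 0 := by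
  classical
  have hcover : ⋃ k ∈ s, A k ⊆ (A j \ A i) ∪ ⋃ k ∈ s.erase j, A k := by
    intro x hx
    obtain ⟨k, hk, hxk⟩ := mem_iUnion₂.1 hx
    by_cases hkj : k = j
    · subst hkj
      by_cases hxi : x ∈ A i
      · exact Or.inr (mem_biUnion (Finset.mem_erase.2 ⟨hij, hi⟩) hxi)
      · exact Or.inl ⟨hxk, hxi⟩
    · exact Or.inr (mem_biUnion (Finset.mem_erase.2 ⟨hkj, hk⟩) hxk)
  have key : μ (⋃ k ∈ s, A k) + μ (A j ∩ A i) ≤ μ (⋃ k ∈ s, A k) := calc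
    _ ≤ μ (A j \ A i) + ∑ k ∈ s.erase j, μ (A k) + μ (A j ∩ A i) := by
      gcongr
      exact (measure_mono hcover).trans
        ((measure_union_le _ _).trans (by gcongr; exact measure_biUnion_finset_le _ _))
    _ = ∑ k ∈ s, μ (A k) := by
      rw [add_right_comm, measure_sdiff_add_inter _ hAi,
        Finset.add_sum_erase _ (fun k => μ (A k)) hj]
    _ ≤ _ := hsum
  exact nonpos_iff_eq_zero.1 <| (ENNReal.cancel_of_ne
    (ne_top_of_le_ne_top hfin (measure_biUnion_finset_le _ _))).add_le_iff_nonpos_right.1 key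

lemma vadd_smul_set_eq (K : Set ℝ) {a b r : ℝ} (hr : r ≠ 0) :
    b +ᵥ r • K = a +ᵥ r • ((b - a) / r +ᵥ K) := by
  ext x
  simp only [mem_vadd_set, mem_smul_set, vadd_eq_add, smul_eq_mul, exists_exists_and_eq_and]
  constructor <;> rintro ⟨y, hy, rfl⟩ <;> exact ⟨y, hy, by field_simp; ring⟩

/-- The measures of the copies add up to at most that of `K`, so they overlap only in null sets;
but translating `K` by less than `δ` keeps most of it inside `K`. -/
lemma exists_pos_le_abs_sub_of_subset_biUnion {K : Set ℝ} (hK : IsCompact K)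
    (hK0 : volume K ≠ 0) :
    ∃ δ > 0, ∀ {ι : Type} (s : Finset ι) (c : ι → ℝ) {r : ℝ}, 0 < r → s.card * r ≤ 1 →
      K ⊆ ⋃ i ∈ s, c i +ᵥ r • K → ∀ i ∈ s, ∀ j ∈ s, i ≠ j → δ * r ≤ |c j - c i| := by
  obtain ⟨δ, hδ, hball⟩ := Metric.eventually_nhds_iff.1
    (eventually_nhds_zero_measure_vadd_sdiff_lt hK hK.isClosed hK0 (μ := volume))
  refine ⟨δ, hδ, fun s c r hr hcard hcover i hi j hj hij => ?_⟩
  have hpiece : ∀ (a : ℝ) (L : Set ℝ), volume (a +ᵥ r • L) = ENNReal.ofReal r * volume L :=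
    fun a L => by rw [measure_vadd, Measure.addHaar_smul_of_nonneg _ hr.le, Module.finrank_self,
      pow_one]
  have hsum : ∑ k ∈ s, volume (c k +ᵥ r • K) ≤ volume K := by
    simp only [hpiece, Finset.sum_const, nsmul_eq_mul, ← mul_assoc]
    refine mul_le_of_le_one_left zero_le ?_
    rw [← ENNReal.ofReal_natCast, ← ENNReal.ofReal_mul (by positivity)]
    exact ENNReal.ofReal_le_one.2 hcard
  have hnull := measure_inter_eq_zero_of_sum_le (hsum.trans (measure_mono hcover))
    (ne_top_of_le_ne_top hK.measure_lt_top.ne hsum) hi hj hij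
    ((hK.smul r).isClosed.measurableSet.const_vadd (c i))
  rw [vadd_smul_set_eq K (a := c i) hr.ne', ← vadd_set_inter, ← smul_set_inter₀ hr.ne', hpiece,
    mul_eq_zero, ENNReal.ofReal_eq_zero, or_iff_right hr.not_ge] at hnull
  have hdiff := measure_sdiff_add_inter (μ := volume) ((c j - c i) / r +ᵥ K)
    hK.isClosed.measurableSet
  rw [hnull, add_zero, measure_vadd] at hdiff
  by_contra hlt
  refine (hball (y := (c j - c i) / r) ?_).ne hdiff
  rw [dist_zero_right, Real.norm_eq_abs, abs_div, abs_of_pos hr, div_lt_iff₀ hr]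
  linarith

lemma Complex.volume_eq_zero_of_ae_volume_eq_zero {S : Set ℂ} (hS : MeasurableSet S)
    (h : ∀ᵐ y : ℝ, volume {x : ℝ | (x : ℂ) + y * Complex.I ∈ S} = 0) : volume S = 0 := by
  rw [← (Complex.volume_preserving_equiv_real_prod.symm _).measure_preimage hS.nullMeasurableSet,
    Measure.volume_eq_prod,
    Measure.prod_apply_symm (hS.preimage Complex.measurableEquivRealProd.symm.measurable)]
  refine (lintegral_congr_ae (h.mono fun y hy => ?_)).trans lintegral_zero
  rw [← hy]
  congr 1
  ext x
  simp [Complex.mk_eq_add_mul_I]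

noncomputable def digitWeight (S : Finset ℕ) : ℝ := ∑ j ∈ S, 1 / 4 ^ (j + 1)

def sliceB (h : ℝ) : Set ℝ := (1 - h) • E + (2 * h) • E

lemma summable_digits {ε : ℕ → ℝ} (hε : ∀ j, |ε j| ≤ 1) :
    Summable fun j => ε j / 4 ^ (j + 1) := by
  refine Summable.of_norm_bounded
    (summable_geometric_of_lt_one (by norm_num) (by norm_num : (1 / 4 : ℝ) < 1)) fun j => ?_
  rw [norm_div, Real.norm_eq_abs, norm_pow, Real.norm_ofNat, div_pow, one_pow]
  exact div_le_div₀ zero_le_one (hε j) (by positivity) (pow_le_pow_right₀ (by norm_num) j.le_succ)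

lemma abs_le_one_of_digit {ε : ℝ} (hε : ε = 0 ∨ ε = 1) : |ε| ≤ 1 := by
  rcases hε with rfl | rfl <;> norm_num

lemma exists_digitWeight_add_of_mem_E {x : ℝ} (hx : x ∈ E) (n : ℕ) :
    ∃ S ∈ (Finset.range n).powerset, ∃ y ∈ E, x = digitWeight S + y / 4 ^ n := by
  classical
  obtain ⟨ε, hε, rfl⟩ := hx
  refine ⟨(Finset.range n).filter (ε · = 1), Finset.mem_powerset.2 (Finset.filter_subset _ _),
    ∑' j, ε (j + n) / 4 ^ (j + 1), ⟨fun j => ε (j + n), fun j => hε _, rfl⟩, ?_⟩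
  rw [← (summable_digits fun j => abs_le_one_of_digit (hε j)).sum_add_tsum_nat_add n,
    digitWeight, Finset.sum_filter, ← tsum_div_const]
  congr 1
  · refine Finset.sum_congr rfl fun j _ => ?_
    rcases hε j with h | h <;> simp [h]
  · congr 1 with j
    rw [div_div, ← pow_add, add_right_comm]

lemma isCompact_E : IsCompact E := by
  have hE : E = (fun ε : ℕ → ℝ => ∑' j, ε j / 4 ^ (j + 1)) '' univ.pi fun _ => {0, 1} := by
    ext x
    simp [E, eq_comm]
  rw [hE]
  refine (isCompact_univ_pi fun _ => (Set.toFinite _).isCompact).image_of_continuousOn ?_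
  rw [continuousOn_iff_continuous_domRestrict]
  refine continuous_tsum (u := fun j => 1 / 4 ^ (j + 1)) (fun j => ?_) ?_ fun j ε => ?_
  · exact ((continuous_apply j).comp continuous_subtype_val).div_const _
  · simpa using summable_digits (ε := fun _ => 1) fun _ => by norm_num
  · have hε : |(ε : ℕ → ℝ) j| ≤ 1 := by
      rcases (mem_univ_pi.1 ε.2) j with h | h <;> simp_all
    rw [Real.norm_eq_abs, abs_div, abs_of_pos (by positivity : (0 : ℝ) < 4 ^ (j + 1))]
    gcongr

lemma isCompact_sliceB (h : ℝ) : IsCompact (sliceB h) :=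
  (isCompact_E.smul _).add (isCompact_E.smul _)

lemma sliceB_subset_iUnion (h : ℝ) (n : ℕ) :
    sliceB h ⊆ ⋃ p ∈ (Finset.range n).powerset ×ˢ (Finset.range n).powerset,
      ((1 - h) * digitWeight p.1 + 2 * h * digitWeight p.2) +ᵥ ((4 : ℝ) ^ n)⁻¹ • sliceB h := by
  rintro _ ⟨_, ⟨x, hx, rfl⟩, _, ⟨y, hy, rfl⟩, rfl⟩
  obtain ⟨S, hS, x', hx', rfl⟩ := exists_digitWeight_add_of_mem_E hx n
  obtain ⟨T, hT, y', hy', rfl⟩ := exists_digitWeight_add_of_mem_E hy n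
  refine mem_biUnion (x := (S, T)) (Finset.mem_product.2 ⟨hS, hT⟩) ⟨_, ⟨_, ⟨_, ⟨x', hx', rfl⟩, _,
    ⟨y', hy', rfl⟩, rfl⟩, rfl⟩, ?_⟩
  simp only [smul_eq_mul, vadd_eq_add]
  ring

lemma ofReal_add_mul_I_mem_B_iff (x h : ℝ) :
    (x : ℂ) + h * Complex.I ∈ B ↔ h ∈ Icc 0 1 ∧ x ∈ sliceB h := by
  constructor
  · rintro ⟨x', hx', y', hy', h', hh', heq⟩
    have him := congrArg Complex.im heq
    have hre := congrArg Complex.re heq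
    simp only [Complex.add_im, Complex.add_re, Complex.mul_im, Complex.mul_re,
      Complex.ofReal_re, Complex.ofReal_im, Complex.I_re, Complex.I_im, Complex.sub_re,
      Complex.sub_im, Complex.one_re, Complex.one_im] at him hre
    norm_num at him hre
    subst him
    exact ⟨hh', _, ⟨x', hx', rfl⟩, _, ⟨y', hy', rfl⟩, by simp only [smul_eq_mul]; linarith⟩
  · rintro ⟨hh, _, ⟨x', hx', rfl⟩, _, ⟨y', hy', rfl⟩, rfl⟩
    refine ⟨x', hx', y', hy', h, hh, ?_⟩
    push_cast [smul_eq_mul]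
    ring

lemma isCompact_B : IsCompact B := by
  have hB : B = (fun p : (ℝ × ℝ) × ℝ =>
      (1 - p.2) * (p.1.1 : ℂ) + p.2 * (2 * (p.1.2 : ℂ) + Complex.I)) '' ((E ×ˢ E) ×ˢ Icc 0 1) := by
    ext w
    simp only [B, mem_ofPred_eq, mem_image, mem_prod, Prod.exists]
    grind
  rw [hB]
  exact ((isCompact_E.prod isCompact_E).prod isCompact_Icc).image (by fun_prop)

noncomputable def digitVal (c : ℕ → ℤ) (n : ℕ) : ℝ := ∑ j ∈ Finset.range n, (c j : ℝ) / 4 ^ (j + 1)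

def DigitSeparated (η t : ℝ) : Prop :=
  ∀ n (a b : ℕ → ℤ), (∀ j, |a j| ≤ 1) → (∀ j, |b j| ≤ 1) → (∃ j < n, a j ≠ 0 ∨ b j ≠ 0) →
    η / 4 ^ n ≤ |digitVal a n + t * digitVal b n|

def separatedParams : Set ℝ := {t | 0 < t ∧ ∃ η > 0, DigitSeparated η t}

lemma digitVal_succ' (c : ℕ → ℤ) (n : ℕ) :
    digitVal c (n + 1) = (c 0 + digitVal (fun j => c (j + 1)) n) / 4 := by
  simp only [digitVal, Finset.sum_range_succ', add_div, Finset.sum_div, div_div, ← pow_succ]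
  norm_num [add_comm]

lemma digitVal_update (c : ℕ → ℤ) (n : ℕ) (γ : ℤ) :
    digitVal (Function.update c n γ) (n + 1) = digitVal c n + γ / 4 ^ (n + 1) := by
  rw [digitVal, Finset.sum_range_succ, Function.update_self]
  congr 1
  exact Finset.sum_congr rfl fun j hj =>
    by rw [Function.update_of_ne (Finset.mem_range.1 hj).ne]

lemma digitVal_truncate (a : ℕ → ℤ) (n r : ℕ) :
    digitVal (fun j => if j < n then a j else 0) (n + r) = digitVal a n := by
  rw [digitVal, Finset.sum_range_add]
  simp only [add_lt_iff_neg_left, not_lt_zero, if_false, Int.cast_zero, zero_div,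
    Finset.sum_const_zero, add_zero]
  exact Finset.sum_congr rfl fun j hj => by rw [if_pos (Finset.mem_range.1 hj)]

lemma digitVal_shift (b : ℕ → ℤ) (n r : ℕ) :
    digitVal (fun j => if r ≤ j then b (j - r) else 0) (n + r) = digitVal b n / 4 ^ r := by
  rw [digitVal, add_comm, Finset.sum_range_add, digitVal, Finset.sum_div]
  rw [Finset.sum_eq_zero fun j hj => by simp [(Finset.mem_range.1 hj).not_ge], zero_add]
  refine Finset.sum_congr rfl fun j _ => ?_
  simp only [Nat.le_add_right, if_true, Nat.add_sub_cancel_left, div_div, ← pow_add]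
  ring_nf

lemma abs_digitVal_le {c : ℕ → ℤ} (hc : ∀ j, |c j| ≤ 1) (n : ℕ) : |digitVal c n| ≤ 1 / 3 := by
  induction n generalizing c with
  | zero => simp [digitVal]
  | succ n ih =>
    have h0 : |(c 0 : ℝ)| ≤ 1 := by exact_mod_cast hc 0
    rw [digitVal_succ', abs_div, abs_of_pos (by norm_num : (0 : ℝ) < 4)]
    linarith [abs_add_le (c 0 : ℝ) (digitVal (fun j => c (j + 1)) n), ih fun j => hc (j + 1)]

lemma le_abs_digitVal_succ {c : ℕ → ℤ} (hc : ∀ j, |c j| ≤ 1) (h0 : c 0 = -1) (n : ℕ) :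
    1 / 6 ≤ |digitVal c (n + 1)| := by
  have htail := abs_le.1 (abs_digitVal_le (fun j => hc (j + 1)) n)
  rw [digitVal_succ', h0, abs_div, abs_of_pos (by norm_num : (0 : ℝ) < 4),
    le_div_iff₀ (by norm_num)]
  push_cast
  rw [abs_of_neg (by linarith)]
  linarith

lemma le_abs_digitVal {b : ℕ → ℤ} (hb : ∀ j, |b j| ≤ 1) (hb01 : b 0 = -1 ∨ b 0 = 0 ∧ b 1 = -1)
    {n : ℕ} (hn : 2 ≤ n) : 1 / 24 ≤ |digitVal b n| := by
  obtain ⟨n, rfl⟩ := Nat.exists_eq_add_of_le' hn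
  rcases hb01 with hb0 | ⟨hb0, hb1⟩
  · linarith [le_abs_digitVal_succ hb hb0 (n + 1)]
  · have := le_abs_digitVal_succ (fun j => hb (j + 1)) hb1 n
    rw [digitVal_succ', hb0, abs_div, abs_of_pos (by norm_num : (0 : ℝ) < 4)]
    push_cast
    rw [zero_add]
    linarith

lemma digitWeight_filter_sub {a : ℕ → ℤ} (ha : ∀ j, |a j| ≤ 1) (n : ℕ) :
    digitWeight ((Finset.range n).filter (a · = 1)) -
      digitWeight ((Finset.range n).filter (a · = -1)) = digitVal a n := by
  rw [digitWeight, digitWeight, Finset.sum_filter, Finset.sum_filter, ← Finset.sum_sub_distrib]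
  refine Finset.sum_congr rfl fun j _ => ?_
  rcases abs_le.1 (ha j) with ⟨h1, h2⟩
  obtain h | h | h : a j = -1 ∨ a j = 0 ∨ a j = 1 := by omega
  all_goals simp [h, neg_div]

namespace DigitSeparated

lemma mono {η η' t : ℝ} (hsep : DigitSeparated η t) (h : η' ≤ η) : DigitSeparated η' t :=
  fun n a b ha hb hne => le_trans (by gcongr) (hsep n a b ha hb hne)

lemma div_pow {η t : ℝ} (hsep : DigitSeparated η t) (r : ℕ) :
    DigitSeparated (η / 4 ^ r) (t / 4 ^ r) := by
  intro n a b ha hb ⟨j, hjn, hj⟩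
  have key := hsep (n + r) (fun j => if j < n then a j else 0)
    (fun j => if r ≤ j then b (j - r) else 0) (fun j => by split_ifs <;> simp [ha])
    (fun j => by split_ifs <;> simp [hb]) ?_
  · rw [digitVal_truncate, digitVal_shift, pow_add, ← div_div] at key
    rwa [div_right_comm, div_mul_eq_mul_div, mul_div_assoc]
  · rcases hj with hj | hj
    · exact ⟨j, by omega, Or.inl (by simpa [hjn] using hj)⟩
    · exact ⟨j + r, by omega, Or.inr (by simpa using hj)⟩

lemma inv {η t : ℝ} (hsep : DigitSeparated η t) (ht : 0 < t) (ht1 : t ≤ 1) :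
    DigitSeparated η t⁻¹ := by
  intro n a b ha hb ⟨j, hjn, hj⟩
  have key := hsep n b a hb ha ⟨j, hjn, hj.symm⟩
  have heq : digitVal a n + t⁻¹ * digitVal b n = t⁻¹ * (digitVal b n + t * digitVal a n) := by
    field_simp
    ring
  rw [heq, abs_mul, abs_of_pos (inv_pos.2 ht)]
  exact key.trans (le_mul_of_one_le_left (abs_nonneg _) (one_le_inv₀ ht |>.2 ht1))

end DigitSeparated

lemma exists_digitSeparated_of_volume_sliceB_ne_zero {h : ℝ} (h0 : 0 < h) (h1 : h < 1)
    (hK : volume (sliceB h) ≠ 0) : ∃ η > 0, DigitSeparated η (2 * h / (1 - h)) := by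
  classical
  obtain ⟨δ, hδ, hsep⟩ := exists_pos_le_abs_sub_of_subset_biUnion (isCompact_sliceB h) hK
  refine ⟨δ, hδ, fun n a b ha hb ⟨j, hjn, hj⟩ => ?_⟩
  let word (d : ℕ → ℤ) (e : ℤ) : Finset ℕ := (Finset.range n).filter (d · = e)
  have hmem (e : ℤ) : (word a e, word b e) ∈
      (Finset.range n).powerset ×ˢ (Finset.range n).powerset :=
    Finset.mem_product.2 ⟨Finset.mem_powerset.2 (Finset.filter_subset _ _),
      Finset.mem_powerset.2 (Finset.filter_subset _ _)⟩
  have hne : (word a (-1), word b (-1)) ≠ (word a 1, word b 1) := by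
    intro heq
    have hA := Finset.ext_iff.1 (Prod.mk.inj heq).1 j
    have hB := Finset.ext_iff.1 (Prod.mk.inj heq).2 j
    simp only [word, Finset.mem_filter, Finset.mem_range, hjn, true_and] at hA hB
    rcases abs_le.1 (ha j) with ⟨_, _⟩
    rcases abs_le.1 (hb j) with ⟨_, _⟩
    omega
  have hcard : (((Finset.range n).powerset ×ˢ (Finset.range n).powerset).card : ℝ) *
      ((4 : ℝ) ^ n)⁻¹ ≤ 1 := by
    rw [Finset.card_product, Finset.card_powerset, Finset.card_range, Nat.cast_mul, Nat.cast_pow,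
      Nat.cast_ofNat, ← mul_pow]
    norm_num
  have key := hsep ((Finset.range n).powerset ×ˢ (Finset.range n).powerset)
    (fun p => (1 - h) * digitWeight p.1 + 2 * h * digitWeight p.2) (by positivity) hcard
    (sliceB_subset_iUnion h n) _ (hmem (-1)) _ (hmem 1) hne
  have hdiff : (1 - h) * digitWeight (word a 1) + 2 * h * digitWeight (word b 1) -
      ((1 - h) * digitWeight (word a (-1)) + 2 * h * digitWeight (word b (-1))) =
      (1 - h) * (digitVal a n + 2 * h / (1 - h) * digitVal b n) := by
    have : 1 - h ≠ 0 := by linarith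
    simp only [word, ← digitWeight_filter_sub ha n, ← digitWeight_filter_sub hb n]
    field_simp
    ring
  rw [hdiff, abs_mul, abs_of_pos (by linarith)] at key
  rw [div_eq_mul_inv]
  exact key.trans (mul_le_of_le_one_left (abs_nonneg _) (by linarith))

-- `(t + 1) / 3` is the bound `M` with `4 M = M + (t + 1)`, the largest value of `α + β t`.
lemma exists_digit_step {t y : ℝ} (ht1 : 1 ≤ t) (ht4 : t ≤ 4) (hy : |y| ≤ 4 * ((t + 1) / 3)) :
    ∃ α β : ℤ, |α| ≤ 1 ∧ |β| ≤ 1 ∧ |y + α + β * t| ≤ (t + 1) / 3 := by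
  wlog hy0 : 0 ≤ y generalizing y
  · obtain ⟨α, β, hα, hβ, h⟩ := this (y := -y) (by rwa [abs_neg]) (by linarith)
    refine ⟨-α, -β, by rwa [abs_neg], by rwa [abs_neg], ?_⟩
    rw [← abs_neg]
    convert h using 2
    push_cast
    ring
  have hy4 := (abs_le.1 hy).2
  have key : ∀ α β : ℤ, |α| ≤ 1 → |β| ≤ 1 → -((t + 1) / 3) ≤ y + α + β * t →
      y + α + β * t ≤ (t + 1) / 3 → ∃ α β : ℤ, |α| ≤ 1 ∧ |β| ≤ 1 ∧ |y + α + β * t| ≤ (t + 1) / 3 :=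
    fun α β hα hβ h₁ h₂ => ⟨α, β, hα, hβ, abs_le.2 ⟨h₁, h₂⟩⟩
  rcases le_or_gt y ((t + 1) / 3) with h1 | h1
  · exact key 0 0 (by norm_num) (by norm_num)
      (by push_cast; linarith) (by push_cast; linarith)
  rcases le_or_gt y (1 + (t + 1) / 3) with h2 | h2
  · exact key (-1) 0 (by norm_num) (by norm_num)
      (by push_cast; linarith) (by push_cast; linarith)
  rcases le_or_gt y (t - 1 + (t + 1) / 3) with h3 | h3
  · exact key 1 (-1) (by norm_num) (by norm_num)
      (by push_cast; linarith) (by push_cast; linarith)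
  rcases le_or_gt y (t + (t + 1) / 3) with h4 | h4
  · exact key 0 (-1) (by norm_num) (by norm_num)
      (by push_cast; linarith) (by push_cast; linarith)
  · exact key (-1) (-1) (by norm_num) (by norm_num)
      (by push_cast; linarith) (by push_cast; linarith)

lemma exists_update_digits {t : ℝ} (ht1 : 1 ≤ t) (ht4 : t ≤ 4) {a b : ℕ → ℤ} {n : ℕ}
    (hab : |4 ^ n * (digitVal a n + t * digitVal b n)| ≤ (t + 1) / 3) :
    ∃ α β : ℤ, |α| ≤ 1 ∧ |β| ≤ 1 ∧ |4 ^ (n + 1) * (digitVal (Function.update a n α) (n + 1) +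
      t * digitVal (Function.update b n β) (n + 1))| ≤ (t + 1) / 3 := by
  obtain ⟨α, β, hα, hβ, h⟩ := exists_digit_step ht1 ht4
    (y := 4 * (4 ^ n * (digitVal a n + t * digitVal b n)))
    (by rw [abs_mul, abs_of_pos (by norm_num : (0 : ℝ) < 4)]; gcongr)
  refine ⟨α, β, hα, hβ, ?_⟩
  rw [digitVal_update, digitVal_update]
  convert h using 2
  field_simp
  ring

lemma abs_update_le_one {c : ℕ → ℤ} (hc : ∀ j, |c j| ≤ 1) {n : ℕ} {γ : ℤ} (hγ : |γ| ≤ 1) (j : ℕ) :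
    |Function.update c n γ j| ≤ 1 := by
  rcases eq_or_ne j n with rfl | hj
  · rwa [Function.update_self]
  · rw [Function.update_of_ne hj]
    exact hc j

lemma exists_greedy_digits {t : ℝ} (ht1 : 1 ≤ t) (ht4 : t ≤ 4) {n : ℕ} (hn : 2 ≤ n) :
    ∃ a b : ℕ → ℤ, (∀ j, |a j| ≤ 1) ∧ (∀ j, |b j| ≤ 1) ∧ a 0 = 1 ∧
      (b 0 = -1 ∨ b 0 = 0 ∧ b 1 = -1) ∧
      |4 ^ n * (digitVal a n + t * digitVal b n)| ≤ (t + 1) / 3 := by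
  induction n, hn using Nat.le_induction with
  | base =>
    by_cases ht2 : t ≤ 2
    · obtain ⟨α, β, hα, hβ, h⟩ := exists_update_digits ht1 ht4 (a := fun _ => 1) (b := fun _ => -1)
        (n := 1) (by
          have : (4 : ℝ) ^ 1 * (digitVal (fun _ => 1) 1 + t * digitVal (fun _ => -1) 1) =
              1 - t := by
            simp only [digitVal, Finset.range_one, Finset.sum_singleton, Int.cast_one, Int.cast_neg,
              zero_add, pow_one]
            ring
          rw [this, abs_le]
          constructor <;> linarith)
      exact ⟨_, _, abs_update_le_one (by simp) hα, abs_update_le_one (by simp) hβ, by simp,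
        Or.inl (by simp), h⟩
    · refine ⟨Function.update (fun _ => -1) 0 1, Function.update (fun _ => -1) 0 0,
        abs_update_le_one (by simp) (by simp), abs_update_le_one (by simp) (by simp), by simp,
        Or.inr ⟨by simp, by simp⟩, ?_⟩
      have : (4 : ℝ) ^ 2 * (digitVal (Function.update (fun _ => -1) 0 1) 2 +
          t * digitVal (Function.update (fun _ => -1) 0 0) 2) = 3 - t := by
        simp only [digitVal, Finset.sum_range_succ, Finset.range_one, Finset.sum_singleton,
          Function.update_self, ne_eq, one_ne_zero, not_false_eq_true, Function.update_of_ne,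
          Int.cast_one, Int.cast_neg, Int.cast_zero, zero_div, zero_add]
        ring
      rw [this, abs_le]
      constructor <;> linarith
  | succ n hn ih =>
    obtain ⟨a, b, ha, hb, ha0, hb01, hab⟩ := ih
    obtain ⟨α, β, hα, hβ, h⟩ := exists_update_digits ht1 ht4 hab
    refine ⟨_, _, abs_update_le_one ha hα, abs_update_le_one hb hβ,
      by rwa [Function.update_of_ne (by omega)], ?_, h⟩
    rwa [Function.update_of_ne (by omega : 0 ≠ n), Function.update_of_ne (by omega : 1 ≠ n)]

lemma exists_closedBall_not_digitSeparated {t₀ η : ℝ} (ht1 : 1 ≤ t₀) (ht4 : t₀ ≤ 4) (hη : 0 < η)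
    {n : ℕ} (hn : 2 ≤ n) :
    ∃ v, |v - t₀| ≤ 40 / 4 ^ n ∧ ∀ t ∈ closedBall v (η / 4 ^ n), ¬ DigitSeparated η t := by
  obtain ⟨a, b, ha, hb, ha0, hb01, hab⟩ := exists_greedy_digits ht1 ht4 hn
  have hb_ge := le_abs_digitVal hb hb01 hn
  have hb_le := abs_digitVal_le hb n
  have hb0 : digitVal b n ≠ 0 := abs_pos.1 (by linarith)
  have h4 : (0 : ℝ) < 4 ^ n := by positivity
  set D := digitVal a n + t₀ * digitVal b n
  have hD : |D| * 4 ^ n ≤ 5 / 3 := by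
    rw [mul_comm, ← abs_of_pos h4, ← abs_mul]
    linarith
  -- `t ↦ digitVal a n + t * digitVal b n` is affine with `1/24 ≤ |slope| ≤ 1/3`; `v` is its zero
  refine ⟨t₀ - D / digitVal b n, ?_, fun t ht hsep => ?_⟩
  · rw [sub_sub_cancel_left, abs_neg, abs_div, div_le_div_iff₀ (by linarith) h4]
    nlinarith
  · have hlin : digitVal a n + t * digitVal b n = digitVal b n * (t - (t₀ - D / digitVal b n)) := by
      field_simp
      ring
    have key := hsep n a b ha hb ⟨0, by omega, Or.inl (by simp [ha0])⟩
    rw [hlin, abs_mul] at key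
    rw [mem_closedBall, Real.dist_eq] at ht
    have : |digitVal b n| * |t - (t₀ - D / digitVal b n)| ≤ 1 / 3 * (η / 4 ^ n) :=
      mul_le_mul hb_le ht (abs_nonneg _) (by norm_num)
    have : 0 < η / 4 ^ n := by positivity
    linarith

lemma volume_setOf_digitSeparated_inter_Icc {η : ℝ} (hη0 : 0 < η) (hη1 : η ≤ 1) :
    volume ({t | DigitSeparated η t} ∩ Icc 1 4) = 0 := by
  refine measure_eq_zero_of_frequently_gap (c := ENNReal.ofReal (η / 64)) (by simpa using hη0) ?_
  refine ae_restrict_of_ae_restrict_of_subset inter_subset_right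
    (ae_restrict_of_forall_mem measurableSet_Icc fun x hx => ?_)
  have hr : Tendsto (fun m : ℕ => (4 : ℝ)⁻¹ ^ m) atTop (𝓝[>] 0) :=
    tendsto_nhdsWithin_of_tendsto_nhds_of_eventually_within _
      (tendsto_pow_atTop_nhds_zero_of_lt_one (by norm_num) (by norm_num))
      (Eventually.of_forall fun m => by simp)
  refine hr.frequently (Eventually.frequently (Eventually.of_forall fun m => ?_))
  obtain ⟨v, hv, hball⟩ :=
    exists_closedBall_not_digitSeparated hx.1 hx.2 hη0 (n := m + 3) (by omega)
  refine ⟨closedBall v (η / 4 ^ (m + 3)), closedBall_subset_closedBall' ?_,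
    measurableSet_closedBall, disjoint_left.2 fun t ht hts => hball t ht hts.1, ?_⟩
  · rw [Real.dist_eq, inv_pow, pow_add]
    rw [pow_add] at hv
    have : η / (4 ^ m * 4 ^ 3) ≤ 1 / (4 ^ m * 4 ^ 3) := by gcongr
    have : 40 / (4 ^ m * 4 ^ 3) + 1 / (4 ^ m * 4 ^ 3) ≤ (4 ^ m : ℝ)⁻¹ := by
      rw [← add_div, div_le_iff₀ (by positivity)]
      field_simp
      norm_num
    linarith
  · rw [Real.volume_closedBall, Real.volume_closedBall, ← ENNReal.ofReal_mul (by positivity)]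
    apply le_of_eq
    congr 1
    rw [inv_pow, pow_add]
    field_simp
    norm_num

lemma volume_separatedParams_inter_Icc : volume (separatedParams ∩ Icc 1 4) = 0 := by
  refine measure_mono_null ?_ (measure_iUnion_null fun k : ℕ =>
    volume_setOf_digitSeparated_inter_Icc (η := 1 / (k + 1)) (by positivity)
      (div_le_one_of_le₀ (by linarith [k.cast_nonneg (α := ℝ)]) (by positivity)))
  rintro t ⟨⟨-, η, hη, hsep⟩, ht⟩
  obtain ⟨k, hk⟩ := exists_nat_one_div_lt hη
  exact mem_iUnion.2 ⟨k, hsep.mono hk.le, ht⟩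

lemma volume_separatedParams_inter_Ici : volume (separatedParams ∩ Ici 1) = 0 := by
  refine measure_mono_null ?_ (measure_iUnion_null
    (s := fun r : ℕ => ((4 : ℝ) ^ r) • (separatedParams ∩ Icc 1 4)) fun r => by
    rw [Measure.addHaar_smul, volume_separatedParams_inter_Icc, mul_zero])
  rintro t ⟨⟨ht0, η, hη, hsep⟩, ht1⟩
  obtain ⟨r, hr, hr'⟩ := exists_nat_pow_near (mem_Ici.1 ht1) (by norm_num : (1 : ℝ) < 4)
  have h4 : (0 : ℝ) < 4 ^ r := by positivity
  refine mem_iUnion.2 ⟨r, t / 4 ^ r, ⟨⟨by positivity, η / 4 ^ r, by positivity, hsep.div_pow r⟩,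
    (one_le_div h4).2 hr, ?_⟩, by simp [smul_eq_mul, mul_div_cancel₀ _ h4.ne']⟩
  rw [div_le_iff₀ h4, ← pow_succ']
  exact hr'.le

lemma volume_separatedParams : volume separatedParams = 0 := by
  have hinv : volume ((fun t : ℝ => t⁻¹) '' (separatedParams ∩ Ici 1)) = 0 :=
    addHaar_image_eq_zero_of_differentiableOn_of_addHaar_eq_zero _
      (differentiableOn_inv.mono fun t ht => (zero_lt_one.trans_le ht.2).ne')
      volume_separatedParams_inter_Ici
  refine measure_mono_null (fun t ht => ?_)
    (measure_union_null volume_separatedParams_inter_Ici hinv)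
  obtain ⟨ht0, η, hη, hsep⟩ := ht
  rcases le_or_gt 1 t with ht1 | ht1
  · exact Or.inl ⟨⟨ht0, η, hη, hsep⟩, ht1⟩
  · exact Or.inr ⟨t⁻¹, ⟨⟨inv_pos.2 ht0, η, hη, hsep.inv ht0 ht1.le⟩, one_le_inv₀ ht0 |>.2 ht1.le⟩,
      inv_inv t⟩

lemma volume_setOf_volume_sliceB_ne_zero :
    volume {h | h ∈ Ioo (0 : ℝ) 1 ∧ volume (sliceB h) ≠ 0} = 0 := by
  refine measure_mono_null ?_ (addHaar_image_eq_zero_of_differentiableOn_of_addHaar_eq_zero volume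
    (f := fun t : ℝ => t / (t + 2)) ?_ volume_separatedParams)
  · rintro h ⟨⟨h0, h1⟩, hK⟩
    obtain ⟨η, hη, hsep⟩ := exists_digitSeparated_of_volume_sliceB_ne_zero h0 h1 hK
    have : 0 < 1 - h := sub_pos.2 h1
    refine ⟨2 * h / (1 - h), ⟨by positivity, η, hη, hsep⟩, ?_⟩
    field_simp
    ring
  · exact DifferentiableOn.div (by fun_prop) (by fun_prop) fun t ht => by linarith [ht.1]

/-- The union `B` of the segments joining `E` to `2E + i` has planar Lebesgue
measure zero. -/
theorem volume_B_eq_zero : volume B = 0 := by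
  refine Complex.volume_eq_zero_of_ae_volume_eq_zero isCompact_B.isClosed.measurableSet ?_
  filter_upwards [measure_eq_zero_iff_ae_notMem.1 volume_setOf_volume_sliceB_ne_zero,
    Measure.ae_ne volume 0, Measure.ae_ne volume 1] with h hh h0 h1
  by_cases hI : h ∈ Icc (0 : ℝ) 1
  · simp only [ofReal_add_mul_I_mem_B_iff, hI, true_and, ofPred_mem_eq]
    by_contra hK
    exact hh ⟨⟨lt_of_le_of_ne hI.1 (Ne.symm h0), lt_of_le_of_ne hI.2 h1⟩, hK⟩
  · simp [ofReal_add_mul_I_mem_B_iff, hI]
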